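/- Let r be a positive integer, let G be a finite nonempty simple graph and let H be a nonempty induced subgraph of G. Then the r-splitter rank of H is at most the r-splitter rank of G. -/

import Mathlib

open Classical

/-- The closed `r`-neighborhood of `c` inside the induced subgraph `G[A]`:
all vertices of `A` joined to `c` by a walk of length at most `r` staying in `A`. -/
noncomputable def ball {V : Type*} (G : SimpleGraph V) (r : ℕ) (A : Finset V) (c : V) :
    Finset V :=
  A.filter (fun v => ∃ p : G.Walk c v, p.length ≤ r ∧ ∀ x ∈ p.support, x ∈ A)

/-- The `r`-splitter rank of the induced subgraph `G[A]` (with `rank ∅ = 0`). -/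
noncomputable def splitterRank {V : Type*} [DecidableEq V] (G : SimpleGraph V) (r : ℕ)
    (A : Finset V) : ℕ :=
  if _ : A.Nonempty then
    1 + A.attach.sup (fun c =>
      (ball G r A c.1).attach.inf'
        (Finset.attach_nonempty_iff.2 ⟨c.1, Finset.mem_filter.2 ⟨c.2,
          SimpleGraph.Walk.nil, by simp, by simp [c.2]⟩⟩)
        (fun s => splitterRank G r ((ball G r A c.1).erase s.1)))
  else 0
termination_by A.card
decreasing_by
  exact lt_of_lt_of_le (Finset.card_erase_lt_of_mem s.2)
    (Finset.card_le_card (Finset.filter_subset _ _))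

/- Deleting a vertex from the smaller ball never helps the splitter: if Splitter deletes `s` from
the `r`-ball of `c` in `G[B]`, the same move (or deleting `c` itself, when `s` lies outside `A`)
leaves a subset of what remains in `G[B]`, so by induction the rank of `G[A]` cannot exceed that
of `G[B]`. -/

theorem exists_mem_erase_subset_erase {α : Type*} [DecidableEq α] {X Y : Finset α} (hXY : X ⊆ Y)
    {c : α} (hc : c ∈ X) (s : α) : ∃ t ∈ X, X.erase t ⊆ Y.erase s := by
  by_cases hs : s ∈ X
  · exact ⟨s, hs, Finset.erase_subset_erase s hXY⟩
  · refine ⟨c, hc, fun x hx => Finset.mem_erase.2 ⟨?_, hXY (Finset.mem_of_mem_erase hx)⟩⟩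
    rintro rfl
    exact hs (Finset.mem_of_mem_erase hx)

section

variable {V : Type*} (G : SimpleGraph V) (r : ℕ)

theorem ball_subset_ball {A B : Finset V} (h : A ⊆ B) (c : V) : ball G r A c ⊆ ball G r B c := by
  simp only [ball, Finset.subset_iff, Finset.mem_filter]
  rintro v ⟨hvA, p, hp, hsupp⟩
  exact ⟨h hvA, p, hp, fun x hx => h (hsupp x hx)⟩

theorem mem_ball_self {A : Finset V} {c : V} (hc : c ∈ A) : c ∈ ball G r A c :=
  Finset.mem_filter.2 ⟨hc, SimpleGraph.Walk.nil, by simp, by simp [hc]⟩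

theorem card_erase_ball_lt [DecidableEq V] {A : Finset V} {c s : V} (hs : s ∈ ball G r A c) :
    ((ball G r A c).erase s).card < A.card :=
  (Finset.card_erase_lt_of_mem hs).trans_le (Finset.card_le_card (Finset.filter_subset _ _))

theorem splitterRank_mono [DecidableEq V] {A B : Finset V} (hAB : A ⊆ B) :
    splitterRank G r A ≤ splitterRank G r B := by
  rw [splitterRank, splitterRank]
  by_cases hA : A.Nonempty
  · rw [dif_pos hA, dif_pos (hA.mono hAB)]
    refine Nat.add_le_add_left (Finset.sup_le fun c _ => ?_) 1
    refine Finset.le_sup_of_le (Finset.mem_attach _ ⟨c.1, hAB c.2⟩) (Finset.le_inf' _ _ ?_)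
    rintro s -
    obtain ⟨t, ht, hsub⟩ :=
      exists_mem_erase_subset_erase (ball_subset_ball G r hAB c.1) (mem_ball_self G r c.2) s.1
    exact (Finset.inf'_le _ (Finset.mem_attach _ ⟨t, ht⟩)).trans (splitterRank_mono hsub)
  · rw [dif_neg hA]
    exact Nat.zero_le _
termination_by B.card
decreasing_by exact card_erase_ball_lt G r s.2

end

theorem rank_mono_induced_general {V : Type*} [Fintype V] [DecidableEq V]
    (G : SimpleGraph V) (r : ℕ) (H : Finset V) :
    splitterRank G r H ≤ splitterRank G r Finset.univ :=
  splitterRank_mono G r (Finset.subset_univ H)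

/-- The `r`-splitter rank of a nonempty induced subgraph is at most that of the whole graph. -/
theorem rank_mono_induced {V : Type*} [Fintype V] [DecidableEq V] [Nonempty V]
    (G : SimpleGraph V) (r : ℕ) (hr : 0 < r) (H : Finset V) (hH : H.Nonempty) :
    splitterRank G r H ≤ splitterRank G r Finset.univ :=
  rank_mono_induced_general G r H
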